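/- arXiv:2602.12270 — 6 statements merged into one kernel-verified Lean document; each statement's English description precedes it below -/
import Mathlib

section
/- Let g be a generator on subsets of X. Define the Radon number R(g) as the smallest integer k such that every corpus C with |C| ≥ k contains two disjoint nonempty subsets A, B ⊆ C with g(A) ∩ g(B) ≠ ∅. If a finite corpus C satisfies: there exist disjoint subsets A, B ⊆ C with g(A) ∩ g(B) ≠ ∅, then the permissible set p_g(C) = ⋂_{c ∈ C} g(C \ {c}) is nonempty. -/
theorem Set.subset_diff_singleton_or_of_disjoint {α : Type*} {A B C : Set α} (hA : A ⊆ C)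
    (hB : B ⊆ C) (hAB : Disjoint A B) (c : α) : A ⊆ C \ {c} ∨ B ⊆ C \ {c} := by
  by_cases hcA : c ∈ A
  · exact Or.inr (Set.subset_sdiff_singleton hB fun hcB => Set.disjoint_left.1 hAB hcA hcB)
  · exact Or.inl (Set.subset_sdiff_singleton hA hcA)

theorem permissible_nonempty_of_radon_general {X : Type*} (g : Set X → Set X)
    (hmono : ∀ C D, C ⊆ D → g C ⊆ g D)
    (C : Set X)
    (h : ∃ A B : Set X, A ⊆ C ∧ B ⊆ C ∧ Disjoint A B ∧ (g A ∩ g B).Nonempty) :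
    (⋂ c ∈ C, g (C \ {c})).Nonempty := by
  obtain ⟨A, B, hA, hB, hAB, x, hxA, hxB⟩ := h
  refine ⟨x, Set.mem_iInter₂.2 fun c _ => ?_⟩
  rcases Set.subset_diff_singleton_or_of_disjoint hA hB hAB c with hAc | hBc
  · exact hmono _ _ hAc hxA
  · exact hmono _ _ hBc hxB

theorem permissible_nonempty_of_radon {X : Type*} (g : Set X → Set X)
    (hpres : ∀ C, C ⊆ g C)
    (hmono : ∀ C D, C ⊆ D → g C ⊆ g D)
    (hidem : ∀ C, g (g C) = g C)
    (C : Set X) (hfin : C.Finite)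
    (h : ∃ A B : Set X, A ⊆ C ∧ B ⊆ C ∧ Disjoint A B ∧ (g A ∩ g B).Nonempty) :
    (⋂ c ∈ C, g (C \ {c})).Nonempty :=
  permissible_nonempty_of_radon_general g hmono C h
end

section
/- Let g be a generator on subsets of X and C a corpus. If c ∈ g(C) but c ∉ p_g(C) (i.e., c is a violation), and c ∉ C, then p_g(C) is a strict subset of p_g(C ∪ {c}); in particular c ∈ p_g(C ∪ {c}) but c ∉ p_g(C). -/
/-!
A violation forces `C ≠ ∅`, since `p_g(∅)` is everything. On nonempty corpora `p_g` is monotone: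
deleting a point of `D ⊇ C` that lies outside `C` leaves all of `C`, which already contains every
`C \ {c₀}`. And a generable `c ∉ C` is permissible in `C ∪ {c}`: deleting `c` gives back `C`,
and deleting anything else keeps `c`, which preservation then generates.
-/

namespace Generator

variable {X : Type*}

def permissible (g : Set X → Set X) (C : Set X) : Set X :=
  ⋂ c' ∈ C, g (C \ {c'})

@[simp]
theorem permissible_empty (g : Set X → Set X) : permissible g ∅ = Set.univ := by
  simp [permissible]

theorem nonempty_of_notMem_permissible {g : Set X → Set X} {C : Set X} {c : X}
    (hc : c ∉ permissible g C) : C.Nonempty := by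
  rw [Set.nonempty_iff_ne_empty]
  rintro rfl
  simp at hc

theorem permissible_mono {g : Set X → Set X} (hmono : Monotone g) {C D : Set X}
    (hC : C.Nonempty) (hCD : C ⊆ D) : permissible g C ⊆ permissible g D := by
  obtain ⟨c₀, hc₀⟩ := hC
  intro x hx
  rw [permissible, Set.mem_iInter₂] at hx ⊢
  intro d _
  by_cases hdC : d ∈ C
  · exact hmono (Set.sdiff_subset_sdiff_left hCD) (hx d hdC)
  · have hC_sub : C ⊆ D \ {d} :=
      Set.subset_sdiff.mpr ⟨hCD, Set.disjoint_singleton_right.mpr hdC⟩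
    exact hmono (Set.sdiff_subset.trans hC_sub) (hx c₀ hc₀)

theorem mem_permissible_union_singleton {g : Set X → Set X} (hpres : ∀ C, C ⊆ g C)
    {C : Set X} {c : X} (hcC : c ∉ C) (hgen : c ∈ g C) :
    c ∈ permissible g (C ∪ {c}) := by
  rw [permissible, Set.mem_iInter₂]
  rintro c' (hc' | rfl)
  · exact hpres _ ⟨Or.inr rfl, fun h => hcC (h ▸ hc')⟩
  · rwa [Set.union_singleton, Set.insert_sdiff_self_of_notMem hcC]

end Generator

theorem permissible_add_violation_general {X : Type*} (g : Set X → Set X)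
    (hpres : ∀ C, C ⊆ g C)
    (hmono : ∀ C D, C ⊆ D → g C ⊆ g D)
    (C : Set X) (c : X) (hcC : c ∉ C)
    (hgen : c ∈ g C)
    (hviol : c ∉ ⋂ c' ∈ C, g (C \ {c'})) :
    (⋂ c' ∈ C, g (C \ {c'})) ⊂ (⋂ c' ∈ C ∪ {c}, g ((C ∪ {c}) \ {c'})) ∧
      c ∈ ⋂ c' ∈ C ∪ {c}, g ((C ∪ {c}) \ {c'}) := by
  have hmem : c ∈ Generator.permissible g (C ∪ {c}) :=
    Generator.mem_permissible_union_singleton hpres hcC hgen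
  have hsub : Generator.permissible g C ⊆ Generator.permissible g (C ∪ {c}) :=
    Generator.permissible_mono (fun _ _ => hmono _ _)
      (Generator.nonempty_of_notMem_permissible hviol) Set.subset_union_left
  exact ⟨⟨hsub, fun h => hviol (h hmem)⟩, hmem⟩

theorem permissible_add_violation {X : Type*} (g : Set X → Set X)
    (hpres : ∀ C, C ⊆ g C)
    (hmono : ∀ C D, C ⊆ D → g C ⊆ g D)
    (hidem : ∀ C, g (g C) = g C)
    (C : Set X) (c : X) (hcC : c ∉ C)
    (hgen : c ∈ g C)
    (hviol : c ∉ ⋂ c' ∈ C, g (C \ {c'})) :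
    (⋂ c' ∈ C, g (C \ {c'})) ⊂ (⋂ c' ∈ C ∪ {c}, g ((C ∪ {c}) \ {c'})) ∧
      c ∈ ⋂ c' ∈ C ∪ {c}, g ((C ∪ {c}) \ {c'}) :=
  permissible_add_violation_general g hpres hmono C c hcC hgen hviol
end

section
/- Let g be a convex-valued generator on subsets of ℝ^d. If C ⊆ ℝ^d is a finite set with |C| ≥ d + 2, then the permissible set p_g(C) = ⋂_{c ∈ C} g(C \ {c}) is nonempty. -/
/-!
Being at least `d + 2` points, `C` is affinely dependent, so by Radon's theorem it splits into two
parts whose convex hulls share a point `x`.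
Each `c ∈ C` misses one of the two parts, so `x` lies in the convex hull of `C \ {c}`, which is
contained in every convex set containing `C \ {c}`, in particular in `g (C \ {c})`.
-/

open Finset Module

section

variable {𝕜 E : Type*} [AddCommGroup E] {s : Finset E}

theorem Finset.not_affineIndependent_of_finrank_add_two_le [DivisionRing 𝕜] [Module 𝕜 E]
    [FiniteDimensional 𝕜 E] (hs : finrank 𝕜 E + 2 ≤ #s) :
    ¬ AffineIndependent 𝕜 ((↑) : s → E) := fun h ↦ by
  have := h.card_le_finrank_succ.trans (Nat.succ_le_succ (Submodule.finrank_le _))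
  simp only [Fintype.card_coe] at this
  omega

theorem Finset.nonempty_iInter_convexHull_sdiff_singleton [Field 𝕜] [LinearOrder 𝕜]
    [IsStrictOrderedRing 𝕜] [Module 𝕜 E] [FiniteDimensional 𝕜 E] (hs : finrank 𝕜 E + 2 ≤ #s) :
    (⋂ c ∈ (s : Set E), convexHull 𝕜 ((s : Set E) \ {c})).Nonempty := by
  obtain ⟨I, x, hxI, hxIc⟩ :=
    Convex.radon_partition (not_affineIndependent_of_finrank_add_two_le hs)
  refine ⟨x, Set.mem_iInter₂.2 fun c hc ↦ ?_⟩
  lift c to s using hc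
  have hull_subset {J : Set s} (hcJ : c ∉ J) :
      convexHull 𝕜 ((↑) '' J) ⊆ convexHull 𝕜 ((s : Set E) \ {↑c}) :=
    convexHull_mono <| by
      rintro _ ⟨y, hy, rfl⟩
      exact ⟨y.2, fun h ↦ hcJ (Subtype.ext h ▸ hy)⟩
  by_cases hcI : c ∈ I
  · exact hull_subset (not_not_intro hcI) hxIc
  · exact hull_subset hcI hxI

end

theorem permissible_nonempty_convexValued_general (d : ℕ) (g : Set (Fin d → ℝ) → Set (Fin d → ℝ))
    (hpres : ∀ C, C ⊆ g C)
    (hconv : ∀ C, Convex ℝ (g C))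
    (C : Finset (Fin d → ℝ)) (hcard : d + 2 ≤ C.card) :
    (⋂ c ∈ (C : Set (Fin d → ℝ)), g ((C : Set (Fin d → ℝ)) \ {c})).Nonempty := by
  obtain ⟨x, hx⟩ := C.nonempty_iInter_convexHull_sdiff_singleton (𝕜 := ℝ) (by simpa using hcard)
  exact ⟨x, Set.iInter₂_mono (fun c _ ↦ convexHull_min (hpres _) (hconv _)) hx⟩

theorem permissible_nonempty_convexValued (d : ℕ) (g : Set (Fin d → ℝ) → Set (Fin d → ℝ))
    (hpres : ∀ C, C ⊆ g C)
    (hmono : ∀ C D, C ⊆ D → g C ⊆ g D)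
    (hidem : ∀ C, g (g C) = g C)
    (hconv : ∀ C, Convex ℝ (g C))
    (C : Finset (Fin d → ℝ)) (hcard : d + 2 ≤ C.card) :
    (⋂ c ∈ (C : Set (Fin d → ℝ)), g ((C : Set (Fin d → ℝ)) \ {c})).Nonempty :=
  permissible_nonempty_convexValued_general d g hpres hconv C hcard
end

section
/- Radon's theorem implies nonemptiness of the permissible set for the convex hull generator: if C ⊆ ℝ^d is finite with |C| ≥ d + 2, then ⋂_{c ∈ C} conv(C \ {c}) ≠ ∅. -/
/-!
Since `d + 2` points in `ℝ^d` are affinely dependent, Radon's theorem splits `C` into two parts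
whose convex hulls share a point `p`. Any `c ∈ C` is missing from one of the two parts, so `p` lies
in the convex hull of that part, which is contained in `conv (C \ {c})`.
-/

open Set

lemma Set.image_val_subset_diff_singleton {α : Type*} {s : Set α} {J : Set s} {c : s}
    (hc : c ∉ J) : Subtype.val '' J ⊆ s \ {(c : α)} := by
  rintro _ ⟨y, hy, rfl⟩
  exact ⟨y.2, fun hyc => hc (Subtype.ext hyc ▸ hy)⟩

theorem Finset.not_affineIndependent_of_finrank_add_two_le_card {𝕜 E : Type*} [DivisionRing 𝕜]
    [AddCommGroup E] [Module 𝕜 E] [FiniteDimensional 𝕜 E]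
    {s : Finset E} (hs : Module.finrank 𝕜 E + 2 ≤ s.card) :
    ¬ AffineIndependent 𝕜 ((↑) : ↥(s : Set E) → E) := by
  intro hind
  have hcard := hind.card_le_finrank_succ
  have hspan := (vectorSpan 𝕜 (Set.range ((↑) : ↥(s : Set E) → E))).finrank_le
  simp only [Finset.coe_sort_coe, Fintype.card_coe] at hcard
  omega

theorem Convex.iInter_convexHull_diff_singleton_nonempty {𝕜 E : Type*} [Field 𝕜] [LinearOrder 𝕜]
    [IsStrictOrderedRing 𝕜] [AddCommGroup E] [Module 𝕜 E] {s : Set E}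
    (hs : ¬ AffineIndependent 𝕜 ((↑) : s → E)) :
    (⋂ c ∈ s, convexHull 𝕜 (s \ {c})).Nonempty := by
  obtain ⟨I, p, hpI, hpIc⟩ := Convex.radon_partition hs
  refine ⟨p, mem_iInter₂.2 fun c hc => ?_⟩
  by_cases hcI : (⟨c, hc⟩ : s) ∈ I
  · exact convexHull_mono (image_val_subset_diff_singleton (not_not_intro hcI)) hpIc
  · exact convexHull_mono (image_val_subset_diff_singleton hcI) hpI

theorem permissible_nonempty_convexHull (d : ℕ)
    (C : Finset (Fin d → ℝ)) (hcard : d + 2 ≤ C.card) :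
    (⋂ c ∈ (C : Set (Fin d → ℝ)), convexHull ℝ ((C : Set (Fin d → ℝ)) \ {c})).Nonempty :=
  Convex.iInter_convexHull_diff_singleton_nonempty <|
    C.not_affineIndependent_of_finrank_add_two_le_card (𝕜 := ℝ) (by simpa using hcard)
end

section
/- Let g be a generator on subsets of X and 𝒜 a family of subsets of X. The groupwise permissible set P = ⋂_{A ∈ 𝒜} g(C \ A) is stable: g(P) = P, assuming 𝒜 is nonempty. -/
namespace ClosureOperator

variable {α : Type*} {ι : Sort*} {κ : ι → Sort*} [CompleteLattice α] {c : ClosureOperator α}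

theorem isClosed_iInf {f : ι → α} (hf : ∀ i, c.IsClosed (f i)) : c.IsClosed (⨅ i, f i) :=
  sInf_range (f := f) ▸ sInf_isClosed (Set.forall_mem_range.2 hf)

theorem isClosed_iInf₂ {f : ∀ i, κ i → α} (hf : ∀ i j, c.IsClosed (f i j)) :
    c.IsClosed (⨅ (i) (j), f i j) :=
  isClosed_iInf fun i => isClosed_iInf (hf i)

end ClosureOperator

theorem groupwise_permissible_stable_general {X : Type*} (g : Set X → Set X)
    (hpres : ∀ C, C ⊆ g C)
    (hmono : ∀ C D, C ⊆ D → g C ⊆ g D)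
    (hidem : ∀ C, g (g C) = g C)
    (𝒜 : Set (Set X)) (C : Set X) :
    g (⋂ A ∈ 𝒜, g (C \ A)) = ⋂ A ∈ 𝒜, g (C \ A) :=
  let c := ClosureOperator.mk' g (fun _ _ => hmono _ _) hpres fun C => (hidem C).le
  (ClosureOperator.isClosed_iInf₂ fun A _ => c.isClosed_closure (C \ A)).closure_eq

theorem groupwise_permissible_stable {X : Type*} (g : Set X → Set X)
    (hpres : ∀ C, C ⊆ g C)
    (hmono : ∀ C D, C ⊆ D → g C ⊆ g D)
    (hidem : ∀ C, g (g C) = g C)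
    (𝒜 : Set (Set X)) (h𝒜 : 𝒜.Nonempty) (C : Set X) :
    g (⋂ A ∈ 𝒜, g (C \ A)) = ⋂ A ∈ 𝒜, g (C \ A) :=
  groupwise_permissible_stable_general g hpres hmono hidem 𝒜 C
end

section
/- Let (Z_i)_{i≥1} be a sequence of positive real random variables such that: (1) for every ε > 0, almost surely there exists N with Z_n ≤ (1+ε) max_{i ≤ n-1} Z_i for all n ≥ N; and (2) max_{i ≤ n} Z_i → ∞ almost surely. Then for every ε > 0, almost surely there exists Ñ such that for all n ≥ Ñ and all j ∈ {1,…,n}: max_{i ≤ n} Z_i ≤ (1+ε) max_{i ∈ {1,…,n} \ {j}} Z_i. -/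
/-!
The running maximum tends to infinity, so it eventually exceeds every observation up to the
index `N` of hypothesis (1); from then on it is attained only at indices `j > N`, where (1)
bounds `Z j` by `1 + ε` times the maximum of the earlier observations, all of which survive the
removal of `j`. Removing an index that does not attain the maximum does not change it.
-/

open MeasureTheory Filter

namespace Finset

variable {ι α : Type*}

lemma ciSup_coe_eq_sup' [ConditionallyCompleteLattice α] (s : Finset ι) (hs : s.Nonempty)
    (f : ι → α) : (⨆ i : s, f i) = s.sup' hs f := by
  rw [sup'_eq_csSup_image, iSup]
  congr 1
  ext x
  simp [Subtype.exists, eq_comm]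

lemma sup'_le_mul_sup'_erase [DecidableEq ι] {s : Finset ι} {f : ι → ℝ} {c : ℝ} (hc : 1 ≤ c)
    {j : ι} (hj : j ∈ s) (hs : (s.erase j).Nonempty) (hpos : 0 < s.sup' ⟨j, hj⟩ f)
    (hargmax : s.sup' ⟨j, hj⟩ f = f j → f j ≤ c * (s.erase j).sup' hs f) :
    s.sup' ⟨j, hj⟩ f ≤ c * (s.erase j).sup' hs f := by
  obtain ⟨k, hk, hmax⟩ := exists_mem_eq_sup' ⟨j, hj⟩ f
  rcases eq_or_ne k j with rfl | hkj
  · rw [hmax]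
    exact hargmax hmax
  · have hle : s.sup' ⟨j, hj⟩ f ≤ (s.erase j).sup' hs f :=
      hmax ▸ le_sup' f (mem_erase.2 ⟨hkj, hk⟩)
    nlinarith

end Finset

open Finset in
theorem eventually_iSup_Icc_le_mul_iSup_erase {f : ℕ → ℝ} {c : ℝ} (hc : 1 ≤ c) {N : ℕ}
    (hN : 2 ≤ N) (hstep : ∀ n ≥ N, f n ≤ c * ⨆ i : Icc 1 (n - 1), f i)
    (hmax : Tendsto (fun n => ⨆ i : Icc 1 n, f i) atTop atTop) :
    ∀ᶠ n in atTop, ∀ j ∈ Icc 1 n,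
      (⨆ i : Icc 1 n, f i) ≤ c * ⨆ i : (Icc 1 n).erase j, f i := by
  filter_upwards [hmax.eventually_gt_atTop (max (⨆ i : Icc 1 N, f i) 0),
    eventually_ge_atTop N] with n hnmax hNn j hj
  have hj' := mem_Icc.1 hj
  have hs : ((Icc 1 n).erase j).Nonempty :=
    ⟨if j = 1 then 2 else 1, by split_ifs <;> simp [*] <;> omega⟩
  rw [ciSup_coe_eq_sup' _ ⟨j, hj⟩] at hnmax ⊢
  rw [ciSup_coe_eq_sup' _ hs]
  refine sup'_le_mul_sup'_erase hc hj hs ((le_max_right _ _).trans_lt hnmax) fun hjmax => ?_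
  have hNj : N < j := by
    by_contra! hjN
    have hjN' : j ∈ Icc 1 N := mem_Icc.2 ⟨hj'.1, hjN⟩
    rw [ciSup_coe_eq_sup' _ ⟨j, hjN'⟩, max_lt_iff, hjmax] at hnmax
    exact (le_sup' f hjN').not_gt hnmax.1
  have hbefore : (Icc 1 (j - 1)).Nonempty := ⟨1, mem_Icc.2 ⟨le_rfl, by omega⟩⟩
  have hsub : Icc 1 (j - 1) ⊆ (Icc 1 n).erase j := fun i hi => by
    simp only [mem_Icc, mem_erase] at hi ⊢
    omega
  calc f j ≤ c * (Icc 1 (j - 1)).sup' hbefore f := by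
        simpa only [ciSup_coe_eq_sup' _ hbefore] using hstep j hNj.le
    _ ≤ c * ((Icc 1 n).erase j).sup' hs f := by gcongr

theorem no_single_essential_observation_general
    {Ω : Type*} [MeasurableSpace Ω] (μ : Measure Ω)
    (Z : ℕ → Ω → ℝ)
    (h1 : ∀ ε > (0 : ℝ), ∀ᵐ ω ∂μ, ∃ N, 2 ≤ N ∧ ∀ n ≥ N,
        Z n ω ≤ (1 + ε) * ⨆ i : Finset.Icc 1 (n - 1), Z i ω)
    (h2 : ∀ᵐ ω ∂μ,
        Tendsto (fun n => ⨆ i : Finset.Icc 1 n, Z i ω) atTop atTop) :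
    ∀ ε > (0 : ℝ), ∀ᵐ ω ∂μ, ∃ N, ∀ n ≥ N, ∀ j ∈ Finset.Icc 1 n,
        (⨆ i : Finset.Icc 1 n, Z i ω) ≤
          (1 + ε) * ⨆ i : (Finset.Icc 1 n).erase j, Z i ω := by
  intro ε hε
  filter_upwards [h1 ε hε, h2] with ω ⟨N, hN, hstep⟩ hmax
  exact eventually_atTop.1 <|
    eventually_iSup_Icc_le_mul_iSup_erase (by linarith) hN hstep hmax

theorem no_single_essential_observation
    {Ω : Type*} [MeasurableSpace Ω] (μ : Measure Ω) [IsProbabilityMeasure μ]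
    (Z : ℕ → Ω → ℝ)
    (hpos : ∀ i ω, 0 < Z i ω)
    (h1 : ∀ ε > (0 : ℝ), ∀ᵐ ω ∂μ, ∃ N, 2 ≤ N ∧ ∀ n ≥ N,
        Z n ω ≤ (1 + ε) * ⨆ i : Finset.Icc 1 (n - 1), Z i ω)
    (h2 : ∀ᵐ ω ∂μ,
        Tendsto (fun n => ⨆ i : Finset.Icc 1 n, Z i ω) atTop atTop) :
    ∀ ε > (0 : ℝ), ∀ᵐ ω ∂μ, ∃ N, ∀ n ≥ N, ∀ j ∈ Finset.Icc 1 n,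
        (⨆ i : Finset.Icc 1 n, Z i ω) ≤
          (1 + ε) * ⨆ i : (Finset.Icc 1 n).erase j, Z i ω :=
  no_single_essential_observation_general μ Z h1 h2
end
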